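/- (Commutator estimate, uniform boundedness) Let (s_n) be standard mollifiers on ℝ^d and S_n ρ := s_n *_x ρ (convolution in space). Let a ∈ C¹(ℝ^d; ℝ^d) with ∇a ∈ L^∞ and ρ ∈ L²(ℝ^d). Then for each 1 ≤ j ≤ d, the commutator term r_n^j(ρ) := ∂_j([a, S_n]ρ) = ∂_j(a (S_n ρ) − S_n(a ρ)) satisfies ‖r_n^j(ρ)‖_{L²} ≤ C ‖∇a‖_{L^∞} ‖ρ‖_{L²}, where C depends only on d and on the mollifier s (through ‖s(z)|z|‖_{L¹} and ‖∂_j s(z)|z|‖_{L¹}), and is independent of n. -/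

import Mathlib

open MeasureTheory ENNReal ContinuousLinearMap
open scoped Convolution NNReal
open MeasureTheory ENNReal

lemma lintegral_sub_left_eq {d : ℕ} (G : EuclideanSpace ℝ (Fin d) → ℝ≥0∞)
    (x : EuclideanSpace ℝ (Fin d)) : ∫⁻ t, G (x - t) = ∫⁻ t, G t := by
  have h1 : ∫⁻ t, G (x - t) = ∫⁻ t, G (-t) := by
    have := lintegral_sub_right_eq_self (μ := volume) (fun u => G (-u)) x
    simpa [neg_sub] using this
  rw [h1]
  have h2 := MeasureTheory.lintegral_map_equiv (μ := (volume : Measure (EuclideanSpace ℝ (Fin d))))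
    G (MeasurableEquiv.neg (EuclideanSpace ℝ (Fin d)))
  rw [show ⇑(MeasurableEquiv.neg (EuclideanSpace ℝ (Fin d))) =
      (Neg.neg : EuclideanSpace ℝ (Fin d) → EuclideanSpace ℝ (Fin d)) from rfl,
    Measure.map_neg_eq_self] at h2
  exact h2.symm

lemma young_L1_L2 {d : ℕ} (G F : EuclideanSpace ℝ (Fin d) → ℝ≥0∞)
    (hG : Measurable G) (hF : Measurable F) :
    ∫⁻ x, (∫⁻ t, G (x - t) * F t) ^ (2:ℝ) ≤
      (∫⁻ t, G t) ^ (2:ℝ) * ∫⁻ x, F x ^ (2:ℝ) := by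
  have hconj : Real.HolderConjugate 2 2 := Real.HolderConjugate.two_two
  have key : ∀ x, (∫⁻ t, G (x - t) * F t) ^ (2:ℝ) ≤
      (∫⁻ t, G t) * ∫⁻ t, G (x - t) * F t ^ (2:ℝ) := by
    intro x
    have hGx : Measurable fun t => G (x - t) := hG.comp (measurable_const.sub measurable_id)
    have h1 : ∫⁻ t, G (x - t) * F t
        ≤ (∫⁻ t, (fun t => (G (x-t)) ^ (2:ℝ)⁻¹) t ^ (2:ℝ)) ^ (1/2:ℝ) *
          (∫⁻ t, (fun t => (G (x-t)) ^ (2:ℝ)⁻¹ * F t) t ^ (2:ℝ)) ^ (1/2:ℝ) := by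
      refine le_trans (le_of_eq ?_) (ENNReal.lintegral_mul_le_Lp_mul_Lq volume hconj
        (hGx.pow_const _).aemeasurable ((hGx.pow_const _).mul hF).aemeasurable)
      refine lintegral_congr fun t => ?_
      simp only [Pi.mul_apply]
      rw [← mul_assoc, ← ENNReal.rpow_add_of_nonneg _ _ (by norm_num) (by norm_num)]
      norm_num
    have e1 : ∫⁻ t, ((G (x-t)) ^ (2:ℝ)⁻¹) ^ (2:ℝ) = ∫⁻ t, G (x - t) := by
      refine lintegral_congr fun t => ?_
      rw [← ENNReal.rpow_mul]; norm_num
    have e2 : ∫⁻ t, ((G (x-t)) ^ (2:ℝ)⁻¹ * F t) ^ (2:ℝ) = ∫⁻ t, G (x - t) * F t ^ (2:ℝ) := by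
      refine lintegral_congr fun t => ?_
      rw [ENNReal.mul_rpow_of_nonneg _ _ (by norm_num), ← ENNReal.rpow_mul]; norm_num
    have e3 : ∫⁻ t, G (x - t) = ∫⁻ t, G t := lintegral_sub_left_eq G x
    calc (∫⁻ t, G (x - t) * F t) ^ (2:ℝ)
        ≤ ((∫⁻ t, G t) ^ (1/2:ℝ) * (∫⁻ t, G (x - t) * F t ^ (2:ℝ)) ^ (1/2:ℝ)) ^ (2:ℝ) := by
          apply ENNReal.rpow_le_rpow _ (by norm_num)
          simpa only [e1, e2, e3] using h1
      _ = (∫⁻ t, G t) * ∫⁻ t, G (x - t) * F t ^ (2:ℝ) := by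
          rw [ENNReal.mul_rpow_of_nonneg _ _ (by norm_num), ← ENNReal.rpow_mul,
            ← ENNReal.rpow_mul]
          norm_num
  calc ∫⁻ x, (∫⁻ t, G (x - t) * F t) ^ (2:ℝ)
      ≤ ∫⁻ x, (∫⁻ t, G t) * ∫⁻ t, G (x - t) * F t ^ (2:ℝ) := lintegral_mono key
    _ = (∫⁻ t, G t) * ∫⁻ x, ∫⁻ t, G (x - t) * F t ^ (2:ℝ) := lintegral_const_mul _
        (Measurable.lintegral_prod_right ((hG.comp (measurable_fst.sub measurable_snd)).mul
          ((hF.comp measurable_snd).pow_const _)))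
    _ = (∫⁻ t, G t) * ∫⁻ t, ∫⁻ x, G (x - t) * F t ^ (2:ℝ) := by
        rw [lintegral_lintegral_swap]
        exact ((hG.comp (measurable_fst.sub measurable_snd)).mul
          ((hF.comp measurable_snd).pow_const _)).aemeasurable
    _ = (∫⁻ t, G t) * ∫⁻ t, F t ^ (2:ℝ) * ∫⁻ x, G (x - t) := by
        congr 1
        exact lintegral_congr fun t => by
          rw [lintegral_mul_const (f := fun x => G (x - t)) _ (hG.comp (measurable_id.sub measurable_const)), mul_comm]
    _ = (∫⁻ t, G t) ^ (2:ℝ) * ∫⁻ x, F x ^ (2:ℝ) := by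
        have h4 : ∀ t : EuclideanSpace ℝ (Fin d), ∫⁻ x, G (x - t) = ∫⁻ y, G y := fun t =>
          lintegral_sub_right_eq_self G t
        simp_rw [h4]
        rw [lintegral_mul_const _ (hF.pow_const _),
          show ((2:ℝ)) = ((2:ℕ):ℝ) from by norm_num, ENNReal.rpow_natCast]
        ring
open MeasureTheory ENNReal ContinuousLinearMap
open scoped Convolution NNReal

-- scaled kernel
noncomputable def ker {d : ℕ} (s : EuclideanSpace ℝ (Fin d) → ℝ) (n : ℕ) :
    EuclideanSpace ℝ (Fin d) → ℝ := fun z => (n:ℝ)^d * s ((n:ℝ) • z)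

lemma ker_contDiff {d : ℕ} {s : EuclideanSpace ℝ (Fin d) → ℝ} (hs_sm : ContDiff ℝ (⊤ : ℕ∞) s) (n : ℕ) :
    ContDiff ℝ 1 (ker s n) :=
  contDiff_const.mul ((hs_sm.of_le (by simp)).comp (contDiff_id.const_smul ((n:ℝ))))

lemma ker_suppc {d : ℕ} {s : EuclideanSpace ℝ (Fin d) → ℝ} (hs_supp : HasCompactSupport s)
    (n : ℕ) (hn : 0 < n) : HasCompactSupport (ker s n) := by
  have hu : IsUnit ((n:ℝ)) := isUnit_iff_ne_zero.2 (by positivity)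
  have h1 : HasCompactSupport fun z : EuclideanSpace ℝ (Fin d) => s ((n:ℝ) • z) := by
    have := hs_supp.comp_homeomorph (Homeomorph.smul hu.unit (α := EuclideanSpace ℝ (Fin d)))
    convert this using 2 with z
    rfl
  exact h1.mul_left

lemma ker_fderiv {d : ℕ} {s : EuclideanSpace ℝ (Fin d) → ℝ} (hs_sm : ContDiff ℝ (⊤ : ℕ∞) s)
    (n : ℕ) (z : EuclideanSpace ℝ (Fin d)) :
    fderiv ℝ (ker s n) z = ((n:ℝ)^d * (n:ℝ)) • fderiv ℝ s ((n:ℝ) • z) := by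
  have hφ : HasFDerivAt (fun w : EuclideanSpace ℝ (Fin d) => (n:ℝ) • w)
      ((n:ℝ) • ContinuousLinearMap.id ℝ (EuclideanSpace ℝ (Fin d))) z :=
    (hasFDerivAt_id z).const_smul (n:ℝ)
  have hs' : HasFDerivAt s (fderiv ℝ s ((n:ℝ) • z)) ((n:ℝ) • z) :=
    (hs_sm.differentiable (by simp) ((n:ℝ) • z)).hasFDerivAt
  have hcomp := (hs'.comp z hφ).const_mul ((n:ℝ)^d)
  have h2 : HasFDerivAt (ker s n)
      (((n:ℝ)^d) • (fderiv ℝ s ((n:ℝ) • z) ∘L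
        ((n:ℝ) • ContinuousLinearMap.id ℝ (EuclideanSpace ℝ (Fin d))))) z := hcomp
  rw [h2.fderiv]
  ext v
  simp only [ContinuousLinearMap.smul_apply, ContinuousLinearMap.coe_comp', Function.comp_apply,
    ContinuousLinearMap.coe_smul', Pi.smul_apply, ContinuousLinearMap.coe_id', id_eq, _root_.map_smul,
    smul_eq_mul]
  ring

noncomputable def gzero {d : ℕ} (s : EuclideanSpace ℝ (Fin d) → ℝ) :
    EuclideanSpace ℝ (Fin d) → ℝ := fun u => s u + ‖fderiv ℝ s u‖ * ‖u‖

noncomputable def gker {d : ℕ} (s : EuclideanSpace ℝ (Fin d) → ℝ) (n : ℕ) :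
    EuclideanSpace ℝ (Fin d) → ℝ :=
  fun z => |ker s n z| + ‖fderiv ℝ (ker s n) z‖ * ‖z‖

lemma gzero_cont {d : ℕ} {s : EuclideanSpace ℝ (Fin d) → ℝ} (hs_sm : ContDiff ℝ (⊤ : ℕ∞) s) :
    Continuous (gzero s) :=
  hs_sm.continuous.add (((hs_sm.continuous_fderiv (by simp)).norm).mul continuous_norm)

lemma gzero_supp {d : ℕ} {s : EuclideanSpace ℝ (Fin d) → ℝ} (hs_supp : HasCompactSupport s) :
    HasCompactSupport (gzero s) :=
  hs_supp.add (((hs_supp.fderiv (𝕜 := ℝ)).norm).mul_right)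

lemma gzero_nonneg {d : ℕ} {s : EuclideanSpace ℝ (Fin d) → ℝ} (hs_nonneg : ∀ x, 0 ≤ s x)
    (u : EuclideanSpace ℝ (Fin d)) : 0 ≤ gzero s u :=
  add_nonneg (hs_nonneg u) (by positivity)

lemma gker_eq {d : ℕ} {s : EuclideanSpace ℝ (Fin d) → ℝ} (hs_sm : ContDiff ℝ (⊤ : ℕ∞) s)
    (hs_nonneg : ∀ x, 0 ≤ s x) (n : ℕ) :
    gker s n = fun z => (n:ℝ)^d * gzero s ((n:ℝ) • z) := by
  funext z
  have h1 : |ker s n z| = (n:ℝ)^d * s ((n:ℝ) • z) := by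
    rw [ker]; exact abs_of_nonneg (mul_nonneg (by positivity) (hs_nonneg _))
  have h2 : ‖fderiv ℝ (ker s n) z‖ = (n:ℝ)^d * ((n:ℝ) * ‖fderiv ℝ s ((n:ℝ) • z)‖) := by
    rw [ker_fderiv hs_sm, norm_smul]
    simp [abs_of_nonneg, mul_assoc]
  have h3 : ‖(n:ℝ) • z‖ = (n:ℝ) * ‖z‖ := by
    rw [norm_smul]; simp
  simp only [gker, gzero, h1, h2, h3]
  ring

lemma gker_cont {d : ℕ} {s : EuclideanSpace ℝ (Fin d) → ℝ} (hs_sm : ContDiff ℝ (⊤ : ℕ∞) s) (n : ℕ) :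
    Continuous (gker s n) :=
  ((ker_contDiff hs_sm n).continuous.abs).add
    ((((ker_contDiff hs_sm n).continuous_fderiv one_ne_zero).norm).mul continuous_norm)

lemma gker_supp {d : ℕ} {s : EuclideanSpace ℝ (Fin d) → ℝ} (hs_supp : HasCompactSupport s)
    (n : ℕ) (hn : 0 < n) : HasCompactSupport (gker s n) :=
  (ker_suppc hs_supp n hn).abs.add ((((ker_suppc hs_supp n hn).fderiv (𝕜 := ℝ)).norm).mul_right)

lemma gker_nonneg {d : ℕ} {s : EuclideanSpace ℝ (Fin d) → ℝ} (n : ℕ)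
    (z : EuclideanSpace ℝ (Fin d)) : 0 ≤ gker s n z :=
  add_nonneg (abs_nonneg _) (by positivity)

lemma gker_integral {d : ℕ} {s : EuclideanSpace ℝ (Fin d) → ℝ} (hs_sm : ContDiff ℝ (⊤ : ℕ∞) s)
    (hs_nonneg : ∀ x, 0 ≤ s x) (n : ℕ) (hn : 0 < n) :
    ∫ z, gker s n z = ∫ u, gzero s u := by
  have hm : (0:ℝ) < (n:ℝ) := by positivity
  rw [gker_eq hs_sm hs_nonneg n]
  rw [integral_const_mul]
  rw [Measure.integral_comp_smul_of_nonneg (μ := volume) (gzero s) ((n:ℝ)) (hR := hm.le)]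
  rw [finrank_euclideanSpace_fin, smul_eq_mul, ← mul_assoc, mul_inv_cancel₀ (by positivity), one_mul]

set_option maxHeartbeats 1000000 in
lemma pointwise_bound {d : ℕ} {s : EuclideanSpace ℝ (Fin d) → ℝ}
    (hs_sm : ContDiff ℝ (⊤ : ℕ∞) s) (hs_supp : HasCompactSupport s)
    {a : EuclideanSpace ℝ (Fin d) → EuclideanSpace ℝ (Fin d)} (ha : ContDiff ℝ 1 a)
    {L : ℝ} (hL0 : 0 ≤ L)
    (hL : ∀ x y, ‖a x - a y‖ ≤ L * ‖x - y‖)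
    {ρ : EuclideanSpace ℝ (Fin d) → ℝ} (hρm : StronglyMeasurable ρ)
    (hρ : MemLp ρ 2 volume) (n : ℕ) (hn : 0 < n) (j : Fin d)
    (x : EuclideanSpace ℝ (Fin d)) :
    ‖fderiv ℝ (fun z =>
        (∫ y, (n : ℝ) ^ d * s ((n : ℝ) • (z - y)) * ρ y) • a z
          - ∫ y, ((n : ℝ) ^ d * s ((n : ℝ) • (z - y)) * ρ y) • a y)
      x (EuclideanSpace.single j 1)‖ ≤ L * ∫ t, gker s n (x - t) * ‖ρ t‖ := by
  classical
  set k : (EuclideanSpace ℝ (Fin d)) → ℝ := ker s n with hk_def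
  set Lm : ℝ →L[ℝ] ℝ →L[ℝ] ℝ := ContinuousLinearMap.mul ℝ ℝ with hLm_def
  set Lf : (EuclideanSpace ℝ (Fin d)) →L[ℝ] ℝ →L[ℝ] (EuclideanSpace ℝ (Fin d)) :=
    (ContinuousLinearMap.lsmul ℝ ℝ : ℝ →L[ℝ] (EuclideanSpace ℝ (Fin d)) →L[ℝ] (EuclideanSpace ℝ (Fin d))).flip with hLf_def
  set q : (EuclideanSpace ℝ (Fin d)) → (EuclideanSpace ℝ (Fin d)) := fun y => ρ y • a y with hq_def
  have hk1 : ContDiff ℝ 1 k := ker_contDiff hs_sm n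
  have hks : HasCompactSupport k := ker_suppc hs_supp n hn
  have hDkc : Continuous (fderiv ℝ k) := hk1.continuous_fderiv one_ne_zero
  have hDks : HasCompactSupport (fderiv ℝ k) := hks.fderiv (𝕜 := ℝ)
  have hρloc : LocallyIntegrable ρ volume := hρ.locallyIntegrable one_le_two
  have hρnloc : LocallyIntegrable (fun t => ‖ρ t‖) volume :=
    hρloc.mono hρm.norm.aestronglyMeasurable
      (Filter.Eventually.of_forall fun t => by simp)
  have hq_loc : LocallyIntegrable q volume := by
    rw [locallyIntegrable_iff]
    intro K hK
    obtain ⟨M, hM⟩ : ∃ M, ∀ y ∈ K, ‖a y‖ ≤ M :=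
      hK.exists_bound_of_continuousOn ha.continuous.continuousOn
    refine Integrable.mono' (((hρloc.integrableOn_isCompact hK).norm).mul_const M)
      ((hρm.aestronglyMeasurable.smul ha.continuous.aestronglyMeasurable).restrict) ?_
    filter_upwards [ae_restrict_mem hK.measurableSet] with y hy
    rw [hq_def]
    simp only [norm_smul]
    exact mul_le_mul le_rfl (hM y hy) (norm_nonneg _) (norm_nonneg _)
  -- rewrite the function as convolutions
  have hconv_eq : (fun z =>
        (∫ y, (n : ℝ) ^ d * s ((n : ℝ) • (z - y)) * ρ y) • a z
          - ∫ y, ((n : ℝ) ^ d * s ((n : ℝ) • (z - y)) * ρ y) • a y)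
      = fun z => (ρ ⋆[Lm, volume] k) z • a z - (q ⋆[Lf, volume] k) z := by
    funext z
    have h1 : (ρ ⋆[Lm, volume] k) z = ∫ y, (n : ℝ) ^ d * s ((n : ℝ) • (z - y)) * ρ y := by
      rw [convolution_def]
      refine integral_congr_ae (Filter.Eventually.of_forall fun y => ?_)
      simp only [hLm_def, ContinuousLinearMap.mul_apply', hk_def, ker]
      ring
    have h2 : (q ⋆[Lf, volume] k) z
        = ∫ y, ((n : ℝ) ^ d * s ((n : ℝ) • (z - y)) * ρ y) • a y := by
      rw [convolution_def]
      refine integral_congr_ae (Filter.Eventually.of_forall fun y => ?_)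
      simp only [hLf_def, ContinuousLinearMap.flip_apply, ContinuousLinearMap.lsmul_apply,
        hq_def, hk_def, ker, smul_smul]
      try (congr 1; ring)
    rw [h1, h2]
  rw [hconv_eq]
  -- derivative computation
  have hder1 : HasFDerivAt (ρ ⋆[Lm, volume] k)
      ((ρ ⋆[Lm.precompR (EuclideanSpace ℝ (Fin d)), volume] fderiv ℝ k) x) x :=
    hks.hasFDerivAt_convolution_right Lm hρloc hk1 x
  have hder2 : HasFDerivAt (q ⋆[Lf, volume] k)
      ((q ⋆[Lf.precompR (EuclideanSpace ℝ (Fin d)), volume] fderiv ℝ k) x) x :=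
    hks.hasFDerivAt_convolution_right Lf hq_loc hk1 x
  have ha' : HasFDerivAt a (fderiv ℝ a x) x := (ha.differentiable one_ne_zero x).hasFDerivAt
  have hF : HasFDerivAt (fun z => (ρ ⋆[Lm, volume] k) z • a z - (q ⋆[Lf, volume] k) z)
      ((ρ ⋆[Lm, volume] k) x • fderiv ℝ a x
        + ((ρ ⋆[Lm.precompR (EuclideanSpace ℝ (Fin d)), volume] fderiv ℝ k) x).smulRight (a x)
        - (q ⋆[Lf.precompR (EuclideanSpace ℝ (Fin d)), volume] fderiv ℝ k) x) x := (hder1.smul ha').sub hder2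
  rw [hF.fderiv]
  set e : (EuclideanSpace ℝ (Fin d)) := EuclideanSpace.single j 1 with he_def
  have he : ‖e‖ = 1 := by rw [he_def, EuclideanSpace.norm_single]; norm_num
  -- evaluation of the derivative at e
  have hDkec : Continuous fun z => fderiv ℝ k z e := hDkc.clm_apply continuous_const
  have hDkes : HasCompactSupport fun z => fderiv ℝ k z e :=
    hDks.comp_left (g := fun T : (EuclideanSpace ℝ (Fin d)) →L[ℝ] ℝ => T e) rfl
  have hA1 : ((ρ ⋆[Lm.precompR (EuclideanSpace ℝ (Fin d)), volume] fderiv ℝ k) x) e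
      = ∫ t, ρ t * (fderiv ℝ k (x - t) e) := by
    rw [convolution_precompR_apply Lm hρloc hDks hDkc x e, convolution_def]
    simp only [hLm_def, ContinuousLinearMap.mul_apply']
  have hA2 : ((q ⋆[Lf.precompR (EuclideanSpace ℝ (Fin d)), volume] fderiv ℝ k) x) e
      = ∫ t, (fderiv ℝ k (x - t) e) • q t := by
    rw [convolution_precompR_apply Lf hq_loc hDks hDkc x e, convolution_def]
    refine integral_congr_ae (Filter.Eventually.of_forall fun t => ?_)
    simp [hLf_def]
  -- integrability facts
  have I1 : Integrable (fun t => ρ t * (fderiv ℝ k (x - t) e)) volume := by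
    have := hDkes.convolutionExists_right Lm hρloc hDkec x
    exact this
  have I2 : Integrable (fun t => (fderiv ℝ k (x - t) e) • q t) volume := by
    have := hDkes.convolutionExists_right Lf hq_loc hDkec x
    simpa [hLf_def, ConvolutionExistsAt] using this
  have I2' : Integrable (fun t => (ρ t * (fderiv ℝ k (x - t) e)) • a t) volume := by
    refine I2.congr (Filter.Eventually.of_forall fun t => ?_)
    rw [hq_def]
    simp only [smul_smul]
    congr 1
    ring
  -- key rearrangement
  have hsplit : (∫ t, ρ t * (fderiv ℝ k (x - t) e)) • a x
        - ∫ t, (fderiv ℝ k (x - t) e) • q t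
      = ∫ t, (ρ t * (fderiv ℝ k (x - t) e)) • (a x - a t) := by
    rw [← integral_smul_const]
    have h2 : ∫ t, (fderiv ℝ k (x - t) e) • q t
        = ∫ t, (ρ t * (fderiv ℝ k (x - t) e)) • a t := by
      refine integral_congr_ae (Filter.Eventually.of_forall fun t => ?_)
      rw [hq_def]
      simp only [smul_smul]
      congr 1
      ring
    rw [h2, ← integral_sub (I1.smul_const (a x)) I2']
    refine integral_congr_ae (Filter.Eventually.of_forall fun t => ?_)
    simp only [smul_sub]
  -- the lipschitz constant controls the fderiv of a
  have lipA : LipschitzWith ⟨L, hL0⟩ a :=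
    LipschitzWith.of_dist_le_mul fun p r => by rw [dist_eq_norm, dist_eq_norm]; exact hL p r
  have ha'e : ‖fderiv ℝ a x e‖ ≤ L := by
    calc ‖fderiv ℝ a x e‖ ≤ ‖fderiv ℝ a x‖ * ‖e‖ := (fderiv ℝ a x).le_opNorm e
    _ = ‖fderiv ℝ a x‖ := by rw [he, mul_one]
    _ ≤ L := norm_fderiv_le_of_lipschitz ℝ lipA
  -- integrable majorants
  have hK2c : Continuous fun z => ‖fderiv ℝ k z‖ * ‖z‖ := hDkc.norm.mul continuous_norm
  have hK2s : HasCompactSupport fun z => ‖fderiv ℝ k z‖ * ‖z‖ :=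
    (hDks.norm (E := EuclideanSpace ℝ (Fin d) →L[ℝ] ℝ)).mul_right
  have J2 : Integrable (fun t => ‖ρ t‖ * (‖fderiv ℝ k (x - t)‖ * ‖x - t‖)) volume := by
    have := hK2s.convolutionExists_right Lm hρnloc hK2c x
    exact this
  have J1 : Integrable (fun t => ‖ρ t‖ * |k (x - t)|) volume := by
    have := hks.abs.convolutionExists_right Lm hρnloc hk1.continuous.abs x
    exact this
  -- evaluate the derivative at e and regroup
  have heval : ((ρ ⋆[Lm, volume] k) x • fderiv ℝ a x
        + ((ρ ⋆[Lm.precompR (EuclideanSpace ℝ (Fin d)), volume] fderiv ℝ k) x).smulRight (a x)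
        - (q ⋆[Lf.precompR (EuclideanSpace ℝ (Fin d)), volume] fderiv ℝ k) x) e
      = ((∫ t, ρ t * (fderiv ℝ k (x - t) e)) • a x - ∫ t, (fderiv ℝ k (x - t) e) • q t)
        + (ρ ⋆[Lm, volume] k) x • (fderiv ℝ a x e) := by
    simp only [ContinuousLinearMap.sub_apply, ContinuousLinearMap.add_apply,
      ContinuousLinearMap.smul_apply, ContinuousLinearMap.smulRight_apply, hA1, hA2]
    abel
  rw [heval, hsplit]
  -- bound the two pieces
  have hbX : ‖∫ t, (ρ t * (fderiv ℝ k (x - t) e)) • (a x - a t)‖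
      ≤ ∫ t, ‖ρ t‖ * (‖fderiv ℝ k (x - t)‖ * ‖x - t‖) * L := by
    calc ‖∫ t, (ρ t * (fderiv ℝ k (x - t) e)) • (a x - a t)‖
        ≤ ∫ t, ‖(ρ t * (fderiv ℝ k (x - t) e)) • (a x - a t)‖ :=
          norm_integral_le_integral_norm _
      _ ≤ ∫ t, ‖ρ t‖ * (‖fderiv ℝ k (x - t)‖ * ‖x - t‖) * L := by
          refine integral_mono_of_nonneg (Filter.Eventually.of_forall fun t => norm_nonneg _)
            (J2.mul_const L) (Filter.Eventually.of_forall fun t => ?_)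
          have hc : ‖fderiv ℝ k (x - t) e‖ ≤ ‖fderiv ℝ k (x - t)‖ := by
            calc ‖fderiv ℝ k (x - t) e‖ ≤ ‖fderiv ℝ k (x - t)‖ * ‖e‖ :=
                (fderiv ℝ k (x - t)).le_opNorm e
            _ = ‖fderiv ℝ k (x - t)‖ := by rw [he, mul_one]
          calc ‖(ρ t * (fderiv ℝ k (x - t) e)) • (a x - a t)‖
              = ‖ρ t * (fderiv ℝ k (x - t) e)‖ * ‖a x - a t‖ := norm_smul _ _
            _ ≤ (‖ρ t‖ * ‖fderiv ℝ k (x - t)‖) * (L * ‖x - t‖) := by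
                refine mul_le_mul ?_ (hL x t) (norm_nonneg _) (by positivity)
                rw [norm_mul]
                exact mul_le_mul_of_nonneg_left hc (norm_nonneg _)
            _ = ‖ρ t‖ * (‖fderiv ℝ k (x - t)‖ * ‖x - t‖) * L := by ring
  have hbY : ‖(ρ ⋆[Lm, volume] k) x • (fderiv ℝ a x e)‖
      ≤ (∫ t, ‖ρ t‖ * |k (x - t)|) * L := by
    have hu : ‖(ρ ⋆[Lm, volume] k) x‖ ≤ ∫ t, ‖ρ t‖ * |k (x - t)| := by
      rw [convolution_def]
      refine le_trans (norm_integral_le_integral_norm _) (le_of_eq ?_)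
      refine integral_congr_ae (Filter.Eventually.of_forall fun t => ?_)
      simp only [hLm_def, ContinuousLinearMap.mul_apply', norm_mul, Real.norm_eq_abs]
    calc ‖(ρ ⋆[Lm, volume] k) x • (fderiv ℝ a x e)‖
        = ‖(ρ ⋆[Lm, volume] k) x‖ * ‖fderiv ℝ a x e‖ := norm_smul _ _
      _ ≤ (∫ t, ‖ρ t‖ * |k (x - t)|) * L :=
          mul_le_mul hu ha'e (norm_nonneg _)
            (integral_nonneg fun t => by positivity)
  have hsum : (∫ t, ‖ρ t‖ * (‖fderiv ℝ k (x - t)‖ * ‖x - t‖) * L)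
        + (∫ t, ‖ρ t‖ * |k (x - t)|) * L
      = L * ∫ t, gker s n (x - t) * ‖ρ t‖ := by
    rw [integral_mul_const, ← add_mul, ← integral_add J2 J1, mul_comm]
    congr 1
    refine integral_congr_ae (Filter.Eventually.of_forall fun t => ?_)
    simp only [gker, ← hk_def]
    ring
  calc ‖(∫ t, (ρ t * (fderiv ℝ k (x - t) e)) • (a x - a t))
        + (ρ ⋆[Lm, volume] k) x • (fderiv ℝ a x e)‖
      ≤ ‖∫ t, (ρ t * (fderiv ℝ k (x - t) e)) • (a x - a t)‖
        + ‖(ρ ⋆[Lm, volume] k) x • (fderiv ℝ a x e)‖ := norm_add_le _ _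
    _ ≤ (∫ t, ‖ρ t‖ * (‖fderiv ℝ k (x - t)‖ * ‖x - t‖) * L)
        + (∫ t, ‖ρ t‖ * |k (x - t)|) * L := add_le_add hbX hbY
    _ = L * ∫ t, gker s n (x - t) * ‖ρ t‖ := hsum


set_option maxHeartbeats 1000000 in
/-- uniform commutator estimate. For standard mollifiers
`s_n(x) = n^d s(nx)`, `S_n ρ = s_n * ρ`, a `C¹` vector field `a` with
`‖∇a‖_{L^∞} ≤ L`, and `ρ ∈ L²`, the commutator terms
`r_n^j(ρ) = ∂_j(a (S_n ρ) − S_n(a ρ))` satisfy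
`‖r_n^j(ρ)‖_{L²} ≤ C L ‖ρ‖_{L²}` with `C = C(d,s)` independent of `n`. -/
theorem stmt_10 {d : ℕ} (s : EuclideanSpace ℝ (Fin d) → ℝ)
    (hs_sm : ContDiff ℝ (⊤ : ℕ∞) s) (hs_supp : HasCompactSupport s)
    (hs_nonneg : ∀ x, 0 ≤ s x) (hs_int : ∫ x, s x = 1) :
    ∃ C : ℝ, 0 < C ∧
      ∀ (a : EuclideanSpace ℝ (Fin d) → EuclideanSpace ℝ (Fin d)),
        ContDiff ℝ 1 a →
      ∀ L : ℝ, (∀ x y, ‖a x - a y‖ ≤ L * ‖x - y‖) →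
      ∀ ρ : EuclideanSpace ℝ (Fin d) → ℝ, MemLp ρ 2 volume →
      ∀ n : ℕ, 0 < n → ∀ j : Fin d,
        (eLpNorm (fun x =>
            ‖fderiv ℝ (fun z =>
                (∫ y, (n : ℝ) ^ d * s ((n : ℝ) • (z - y)) * ρ y) • a z
                  - ∫ y, ((n : ℝ) ^ d * s ((n : ℝ) • (z - y)) * ρ y) • a y)
              x (EuclideanSpace.single j 1)‖) 2 volume).toReal
          ≤ C * L * (eLpNorm ρ 2 volume).toReal := by
  set CR : ℝ := 1 + ∫ u, gzero s u with hCR_def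
  have hgz0 : 0 ≤ ∫ u, gzero s u := integral_nonneg (gzero_nonneg hs_nonneg)
  have hCR0 : 0 ≤ CR := by positivity
  refine ⟨CR, by positivity, ?_⟩
  intro a ha L hL ρ₀ hρ₀ n hn j
  -- nonnegativity of L
  have hL0 : 0 ≤ L := by
    have h := hL (EuclideanSpace.single j 1) 0
    rw [sub_zero, EuclideanSpace.norm_single] at h
    norm_num at h
    exact le_trans (norm_nonneg _) h
  -- replace ρ₀ by a strongly measurable representative
  obtain ⟨ρ, hρm, hρae⟩ := hρ₀.1
  have hρ : MemLp ρ 2 volume := hρ₀.ae_eq hρae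
  have heq : eLpNorm ρ₀ 2 volume = eLpNorm ρ 2 volume := eLpNorm_congr_ae hρae
  have hfun : (fun z =>
        (∫ y, (n : ℝ) ^ d * s ((n : ℝ) • (z - y)) * ρ₀ y) • a z
          - ∫ y, ((n : ℝ) ^ d * s ((n : ℝ) • (z - y)) * ρ₀ y) • a y)
      = (fun z =>
        (∫ y, (n : ℝ) ^ d * s ((n : ℝ) • (z - y)) * ρ y) • a z
          - ∫ y, ((n : ℝ) ^ d * s ((n : ℝ) • (z - y)) * ρ y) • a y) := by
    funext z
    congr 1
    · congr 1
      exact integral_congr_ae (hρae.mono fun y hy => by simp only [hy])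
    · exact integral_congr_ae (hρae.mono fun y hy => by simp only [hy])
  rw [hfun, heq]
  -- setup for the L² estimate
  set G : EuclideanSpace ℝ (Fin d) → ℝ≥0∞ := fun z => ENNReal.ofReal (gker s n z) with hG_def
  set F : EuclideanSpace ℝ (Fin d) → ℝ≥0∞ := fun t => (‖ρ t‖₊ : ℝ≥0∞) with hF_def
  have hGm : Measurable G := (gker_cont hs_sm n).measurable.ennreal_ofReal
  have hFm : Measurable F := hρm.measurable.nnnorm.coe_nnreal_ennreal
  have hgker_int : Integrable (gker s n) volume :=
    (gker_cont hs_sm n).integrable_of_hasCompactSupport (gker_supp hs_supp n hn)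
  have hIG : ∫⁻ z, G z = ENNReal.ofReal (∫ z, gker s n z) :=
    (ofReal_integral_eq_lintegral_ofReal hgker_int
      (Filter.Eventually.of_forall fun z => gker_nonneg n z)).symm
  have hIG_le : ∫⁻ z, G z ≤ ENNReal.ofReal CR := by
    rw [hIG, gker_integral hs_sm hs_nonneg n hn]
    exact ENNReal.ofReal_le_ofReal (by rw [hCR_def]; linarith)
  have hρloc : LocallyIntegrable ρ volume := hρ.locallyIntegrable one_le_two
  have hρnloc : LocallyIntegrable (fun t => ‖ρ t‖) volume :=
    hρloc.mono hρm.norm.aestronglyMeasurable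
      (Filter.Eventually.of_forall fun t => by simp)
  -- pointwise bound in ℝ≥0∞
  have hpt : ∀ x, ((‖(‖fderiv ℝ (fun z =>
        (∫ y, (n : ℝ) ^ d * s ((n : ℝ) • (z - y)) * ρ y) • a z
          - ∫ y, ((n : ℝ) ^ d * s ((n : ℝ) • (z - y)) * ρ y) • a y)
      x (EuclideanSpace.single j 1)‖)‖₊ : ℝ≥0) : ℝ≥0∞)
      ≤ ENNReal.ofReal L * ∫⁻ t, G (x - t) * F t := by
    intro x
    have hre := pointwise_bound hs_sm hs_supp ha hL0 hL hρm hρ n hn j x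
    have hInt : Integrable (fun t => gker s n (x - t) * ‖ρ t‖) volume := by
      have h0 := (gker_supp hs_supp n hn).convolutionExists_right
        (ContinuousLinearMap.mul ℝ ℝ) hρnloc (gker_cont hs_sm n) x
      refine (h0 : Integrable _ volume).congr
        (Filter.Eventually.of_forall fun t => ?_)
      simp only [ContinuousLinearMap.mul_apply']
      ring
    calc ((‖(‖fderiv ℝ (fun z =>
            (∫ y, (n : ℝ) ^ d * s ((n : ℝ) • (z - y)) * ρ y) • a z
              - ∫ y, ((n : ℝ) ^ d * s ((n : ℝ) • (z - y)) * ρ y) • a y)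
          x (EuclideanSpace.single j 1)‖)‖₊ : ℝ≥0) : ℝ≥0∞)
        = ENNReal.ofReal (‖fderiv ℝ (fun z =>
            (∫ y, (n : ℝ) ^ d * s ((n : ℝ) • (z - y)) * ρ y) • a z
              - ∫ y, ((n : ℝ) ^ d * s ((n : ℝ) • (z - y)) * ρ y) • a y)
          x (EuclideanSpace.single j 1)‖) := by
          rw [nnnorm_norm, ofReal_norm_eq_enorm, enorm_eq_nnnorm]
      _ ≤ ENNReal.ofReal (L * ∫ t, gker s n (x - t) * ‖ρ t‖) := ENNReal.ofReal_le_ofReal hre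
      _ = ENNReal.ofReal L * ENNReal.ofReal (∫ t, gker s n (x - t) * ‖ρ t‖) :=
          ENNReal.ofReal_mul hL0
      _ = ENNReal.ofReal L * ∫⁻ t, G (x - t) * F t := by
          rw [ofReal_integral_eq_lintegral_ofReal hInt (Filter.Eventually.of_forall fun t =>
            mul_nonneg (gker_nonneg n _) (norm_nonneg _))]
          congr 1
          refine lintegral_congr fun t => ?_
          rw [ENNReal.ofReal_mul (gker_nonneg n _), hG_def, hF_def, ofReal_norm_eq_enorm, enorm_eq_nnnorm]
  -- assemble
  set A : ℝ≥0∞ := ENNReal.ofReal L with hA_def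
  have hA2top : A ^ (2:ℝ) ≠ ⊤ := ENNReal.rpow_ne_top_of_nonneg (by norm_num) ofReal_ne_top
  have h5 : eLpNorm (fun x => ‖fderiv ℝ (fun z =>
        (∫ y, (n : ℝ) ^ d * s ((n : ℝ) • (z - y)) * ρ y) • a z
          - ∫ y, ((n : ℝ) ^ d * s ((n : ℝ) • (z - y)) * ρ y) • a y)
      x (EuclideanSpace.single j 1)‖) 2 volume
      ≤ A * ENNReal.ofReal CR * eLpNorm ρ 2 volume := by
    rw [eLpNorm_eq_lintegral_rpow_enorm_toReal two_ne_zero ENNReal.ofNat_ne_top,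
      eLpNorm_eq_lintegral_rpow_enorm_toReal two_ne_zero ENNReal.ofNat_ne_top]
    simp only [ENNReal.toReal_ofNat]
    calc (∫⁻ x, ((‖(‖fderiv ℝ (fun z =>
            (∫ y, (n : ℝ) ^ d * s ((n : ℝ) • (z - y)) * ρ y) • a z
              - ∫ y, ((n : ℝ) ^ d * s ((n : ℝ) • (z - y)) * ρ y) • a y)
          x (EuclideanSpace.single j 1)‖)‖₊ : ℝ≥0) : ℝ≥0∞) ^ (2:ℝ)) ^ (1/2:ℝ)
        ≤ (∫⁻ x, (A * ∫⁻ t, G (x - t) * F t) ^ (2:ℝ)) ^ (1/2:ℝ) := by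
          refine ENNReal.rpow_le_rpow (lintegral_mono fun x => ?_) (by norm_num)
          exact ENNReal.rpow_le_rpow (hpt x) (by norm_num)
      _ = (A ^ (2:ℝ) * ∫⁻ x, (∫⁻ t, G (x - t) * F t) ^ (2:ℝ)) ^ (1/2:ℝ) := by
          rw [← lintegral_const_mul' _ _ hA2top]
          congr 1
          refine lintegral_congr fun x => ?_
          rw [ENNReal.mul_rpow_of_nonneg _ _ (by norm_num)]
      _ ≤ (A ^ (2:ℝ) * ((∫⁻ t, G t) ^ (2:ℝ) * ∫⁻ x, F x ^ (2:ℝ))) ^ (1/2:ℝ) := by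
          exact ENNReal.rpow_le_rpow
            (mul_le_mul_right (young_L1_L2 G F hGm hFm) _) (by norm_num)
      _ ≤ (A ^ (2:ℝ) * ((ENNReal.ofReal CR) ^ (2:ℝ) * ∫⁻ x, F x ^ (2:ℝ))) ^ (1/2:ℝ) := by
          refine ENNReal.rpow_le_rpow (mul_le_mul_right (mul_le_mul_left
            (ENNReal.rpow_le_rpow hIG_le (by norm_num)) _) _) (by norm_num)
      _ = A * ENNReal.ofReal CR * (∫⁻ x, F x ^ (2:ℝ)) ^ (1/2:ℝ) := by
          rw [← mul_assoc, ← ENNReal.mul_rpow_of_nonneg A (ENNReal.ofReal CR)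
            (by norm_num : (0:ℝ) ≤ 2),
            ENNReal.mul_rpow_of_nonneg _ _ (by norm_num : (0:ℝ) ≤ 1/2),
            ← ENNReal.rpow_mul]
          norm_num
  have hfin : eLpNorm ρ 2 volume ≠ ⊤ := hρ.2.ne
  have hRfin : A * ENNReal.ofReal CR * eLpNorm ρ 2 volume ≠ ⊤ :=
    ENNReal.mul_ne_top (ENNReal.mul_ne_top ofReal_ne_top ofReal_ne_top) hfin
  calc (eLpNorm (fun x => ‖fderiv ℝ (fun z =>
        (∫ y, (n : ℝ) ^ d * s ((n : ℝ) • (z - y)) * ρ y) • a z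
          - ∫ y, ((n : ℝ) ^ d * s ((n : ℝ) • (z - y)) * ρ y) • a y)
      x (EuclideanSpace.single j 1)‖) 2 volume).toReal
      ≤ (A * ENNReal.ofReal CR * eLpNorm ρ 2 volume).toReal := ENNReal.toReal_mono hRfin h5
    _ = CR * L * (eLpNorm ρ 2 volume).toReal := by
        rw [ENNReal.toReal_mul, ENNReal.toReal_mul, hA_def, ENNReal.toReal_ofReal hL0,
          ENNReal.toReal_ofReal hCR0]
        ring
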